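/- Let r > 0 and let u ∈ C_b([−r,∞),X) be a bounded continuous function whose restriction to [0,∞) belongs to PSAP_{ω,r}(X). Then the history function s ↦ u_s from [0,∞) into C = C([−r,0],X), defined by u_s(θ) = u(s+θ) for θ ∈ [−r,0], belongs to PSAP_{ω,r}(C); that is, lim_{T→∞} (1/T)∫_r^T sup_{τ∈[s−r,s]} ‖u_{τ+ω} − u_τ‖_C ds = 0. -/

import Mathlib

open MeasureTheory Filter Set

/-- `u ∈ PSAP_{ω,r}(X)`: pseudo S-asymptotically ω-periodic of class r. -/
def PSAPclass {X : Type*} [NormedAddCommGroup X] (ω r : ℝ) (u : ℝ → X) : Prop :=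
  Tendsto (fun T : ℝ => (1 / T) * ∫ s in r..T, ⨆ τ ∈ Set.Icc (s - r) s, ‖u (τ + ω) - u τ‖)
    atTop (nhds 0)

/-!
Extend `u` continuously to all of `ℝ` and put `f τ = ‖u (τ + ω) - u τ‖`. The PSAP integrand is
the sliding-window supremum `W s = sup_{[s-r, s]} f`, while the history integrand is
`sup_{[s-2r, s]} f = max (W (s - r)) (W s)`. As `W` is continuous and nonnegative,
`∫_r^T max (W (s - r)) (W s) ds ≤ ∫_0^r W + 2 ∫_r^T W`, and dividing by `T` gives the limit.
-/

noncomputable def windowSup (f : ℝ → ℝ) (r s : ℝ) : ℝ :=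
  ⨆ τ ∈ Icc (s - r) s, f τ

section windowSup

variable {f : ℝ → ℝ} {r s τ M : ℝ}

theorem windowSup_nonneg (hf : ∀ x, 0 ≤ f x) : 0 ≤ windowSup f r s :=
  Real.iSup_nonneg fun _ => Real.iSup_nonneg fun _ => hf _

theorem windowSup_le (hM : 0 ≤ M) (h : ∀ τ ∈ Icc (s - r) s, f τ ≤ M) :
    windowSup f r s ≤ M :=
  Real.iSup_le (fun τ => Real.iSup_le (h τ) hM) hM

theorem le_windowSup (hf : BddAbove (f '' Icc (s - r) s)) (hτ : τ ∈ Icc (s - r) s) :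
    f τ ≤ windowSup f r s := by
  refine le_ciSup₂ (f := fun τ (_ : τ ∈ Icc (s - r) s) => f τ) (hf.mono ?_) τ hτ
  intro y hy
  simp only [mem_iUnion, mem_range] at hy
  obtain ⟨x, hx, rfl⟩ := hy
  exact mem_image_of_mem f hx

theorem windowSup_eq_biSup_comp_add (f : ℝ → ℝ) (r τ : ℝ) :
    windowSup f r τ = ⨆ θ ∈ Icc (-r) 0, f (τ + θ) := by
  rw [windowSup, ← (Equiv.addLeft τ).iSup_comp]
  refine iSup_congr fun θ => iSup_congr_Prop ?_ fun _ => rfl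
  simp only [Equiv.coe_addLeft, mem_Icc]
  constructor <;> rintro ⟨h₁, h₂⟩ <;> constructor <;> linarith

theorem windowSup_eq_sSup_image (hf : Continuous f) (hf0 : ∀ x, 0 ≤ f x) :
    windowSup f r s = sSup (f '' Icc (s - r) s) := by
  rw [windowSup, csSup_image]
  · exact (isCompact_Icc.bddAbove_image hf.continuousOn).mono (range_domRestrict f _).subset
  · rw [Real.sSup_empty]
    exact Real.iSup_nonneg fun _ => hf0 _

theorem continuous_windowSup (hf : Continuous f) (hf0 : ∀ x, 0 ≤ f x) :
    Continuous (windowSup f r) := by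
  have hshift : ∀ s, f '' Icc (s - r) s = (fun θ => f (s + θ)) '' Icc (-r) 0 := fun s => by
    rw [← image_image f (s + ·), image_const_add_Icc, add_zero, ← sub_eq_add_neg]
  simp_rw [funext fun s => windowSup_eq_sSup_image (r := r) (s := s) hf hf0, hshift]
  exact isCompact_Icc.continuous_sSup (by fun_prop)

theorem windowSup_windowSup (hf : Continuous f) (hf0 : ∀ x, 0 ≤ f x) (hr : 0 ≤ r) :
    windowSup (windowSup f r) r s = max (windowSup f r (s - r)) (windowSup f r s) := by
  have hbdd : ∀ {g : ℝ → ℝ}, Continuous g → ∀ s, BddAbove (g '' Icc (s - r) s) :=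
    fun hg _ => isCompact_Icc.bddAbove_image hg.continuousOn
  apply le_antisymm
  · refine windowSup_le (le_max_of_le_left (windowSup_nonneg hf0)) fun τ hτ =>
      windowSup_le (le_max_of_le_left (windowSup_nonneg hf0)) fun x hx => ?_
    rcases le_total x (s - r) with hxs | hxs
    · exact le_max_of_le_left (le_windowSup (hbdd hf _) ⟨by linarith [hx.1, hτ.1], hxs⟩)
    · exact le_max_of_le_right (le_windowSup (hbdd hf _) ⟨hxs, hx.2.trans hτ.2⟩)
  · have hW := hbdd (continuous_windowSup (r := r) hf hf0) s
    exact max_le (le_windowSup hW ⟨le_rfl, by linarith⟩) (le_windowSup hW ⟨by linarith, le_rfl⟩)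

end windowSup

section average

variable {G : ℝ → ℝ} {r T : ℝ}

theorem integral_max_comp_sub_le (hG : Continuous G) (hG0 : ∀ x, 0 ≤ G x) (hr : 0 ≤ r)
    (hrT : r ≤ T) :
    ∫ s in r..T, max (G (s - r)) (G s) ≤ (∫ s in 0..r, G s) + 2 * ∫ s in r..T, G s := by
  have hint : ∀ a b : ℝ, IntervalIntegrable G volume a b := hG.intervalIntegrable
  have hGr : Continuous fun s => G (s - r) := by fun_prop
  have hshift : ∫ s in r..T, G (s - r) ≤ (∫ s in 0..r, G s) + ∫ s in r..T, G s := by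
    rw [intervalIntegral.integral_comp_sub_right, sub_self,
      intervalIntegral.integral_add_adjacent_intervals (hint 0 r) (hint r T),
      ← intervalIntegral.integral_add_adjacent_intervals (hint 0 (T - r)) (hint (T - r) T)]
    exact le_add_of_nonneg_right
      (intervalIntegral.integral_nonneg (by linarith) fun x _ => hG0 x)
  calc ∫ s in r..T, max (G (s - r)) (G s)
      ≤ ∫ s in r..T, (G (s - r) + G s) :=
        intervalIntegral.integral_mono_on hrT ((hGr.max hG).intervalIntegrable _ _)
          ((hGr.add hG).intervalIntegrable _ _) fun x _ => max_le_add_of_nonneg (hG0 _) (hG0 _)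
    _ = (∫ s in r..T, G (s - r)) + ∫ s in r..T, G s :=
        intervalIntegral.integral_add (hGr.intervalIntegrable _ _) (hint r T)
    _ ≤ (∫ s in 0..r, G s) + 2 * ∫ s in r..T, G s := by linarith

theorem Filter.Tendsto.average_max_comp_sub (hG : Continuous G) (hG0 : ∀ x, 0 ≤ G x) (hr : 0 ≤ r)
    (h : Tendsto (fun T => (1 / T) * ∫ s in r..T, G s) atTop (nhds 0)) :
    Tendsto (fun T => (1 / T) * ∫ s in r..T, max (G (s - r)) (G s)) atTop (nhds 0) := by
  have hupper : Tendsto (fun T => (1 / T) * (∫ s in 0..r, G s) + 2 * ((1 / T) * ∫ s in r..T, G s))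
      atTop (nhds 0) := by
    simpa using (tendsto_inv_atTop_zero.mul_const _).add (h.const_mul 2)
  refine tendsto_of_tendsto_of_tendsto_of_le_of_le' tendsto_const_nhds hupper ?_ ?_
  · filter_upwards [eventually_ge_atTop r, eventually_gt_atTop 0] with T hrT hT
    exact mul_nonneg (by positivity)
      (intervalIntegral.integral_nonneg hrT fun x _ => le_max_of_le_right (hG0 x))
  · filter_upwards [eventually_ge_atTop r, eventually_gt_atTop 0] with T hrT hT
    calc (1 / T) * ∫ s in r..T, max (G (s - r)) (G s)
        ≤ (1 / T) * ((∫ s in 0..r, G s) + 2 * ∫ s in r..T, G s) := by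
          gcongr
          exact integral_max_comp_sub_le hG hG0 hr hrT
      _ = _ := by ring

theorem average_eventuallyEq_of_eqOn_Ici {F : ℝ → ℝ} (h : EqOn F G (Ici r)) :
    (fun T => (1 / T) * ∫ s in r..T, F s) =ᶠ[atTop] fun T => (1 / T) * ∫ s in r..T, G s := by
  filter_upwards [eventually_ge_atTop r] with T hrT
  rw [intervalIntegral.integral_congr fun s hs => h ?_]
  rw [uIcc_of_le hrT] at hs
  exact hs.1

end average

theorem history_psapClass_general {X : Type*} [NormedAddCommGroup X]
    (r ω : ℝ) (hr : 0 < r) (hω : 0 < ω) (u : ℝ → X)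
    (hcont : ContinuousOn u (Set.Ici (-r)))
    (h : PSAPclass ω r u) :
    Tendsto (fun T : ℝ => (1 / T) * ∫ s in r..T,
        ⨆ τ ∈ Set.Icc (s - r) s, ⨆ θ ∈ Set.Icc (-r) (0:ℝ), ‖u (τ + ω + θ) - u (τ + θ)‖)
      atTop (nhds 0) := by
  set v : ℝ → X := fun t => u (max t (-r))
  have hv : Continuous v :=
    hcont.comp_continuous (by fun_prop) fun t => mem_Ici.mpr (le_max_right _ _)
  have hvu : ∀ t, -r ≤ t → v t = u t := fun t ht => congrArg u (max_eq_left ht)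
  set f : ℝ → ℝ := fun τ => ‖v (τ + ω) - v τ‖
  have hf : Continuous f := by fun_prop
  have hf0 : ∀ x, 0 ≤ f x := fun _ => norm_nonneg _
  have hfu : ∀ τ, -r ≤ τ → f τ = ‖u (τ + ω) - u τ‖ := fun τ hτ => by
    simp only [f, hvu τ hτ, hvu (τ + ω) (by linarith)]
  have hpsap : EqOn (fun s => ⨆ τ ∈ Icc (s - r) s, ‖u (τ + ω) - u τ‖) (windowSup f r) (Ici r) :=
    fun s hs => biSup_congr fun τ hτ => (hfu τ (by linarith [hτ.1, mem_Ici.mp hs])).symm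
  have hhist : EqOn (fun s => max (windowSup f r (s - r)) (windowSup f r s))
      (fun s => ⨆ τ ∈ Icc (s - r) s, ⨆ θ ∈ Icc (-r) (0:ℝ), ‖u (τ + ω + θ) - u (τ + θ)‖)
      (Ici r) := fun s hs => by
    dsimp only
    rw [← windowSup_windowSup hf hf0 hr.le, windowSup]
    refine biSup_congr fun τ hτ => ?_
    rw [windowSup_eq_biSup_comp_add]
    refine biSup_congr fun θ hθ => ?_
    rw [hfu _ (by linarith [hτ.1, hθ.1, mem_Ici.mp hs]), add_right_comm]
  exact ((h.congr' (average_eventuallyEq_of_eqOn_Ici hpsap)).average_max_comp_sub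
    (continuous_windowSup hf hf0) (fun _ => windowSup_nonneg hf0) hr.le).congr'
    (average_eventuallyEq_of_eqOn_Ici hhist)

/-- Lemma 2.3: if `u ∈ C_b([−r,∞),X)` with `u|_{[0,∞)} ∈ PSAP_{ω,r}(X)`,
then the history `s ↦ u_s ∈ C([−r,0],X)` is in `PSAP_{ω,r}(C)`, i.e.
`(1/T)∫_r^T sup_{τ∈[s−r,s]} ‖u_{τ+ω} − u_τ‖_C ds → 0`, where
`‖u_{τ+ω} − u_τ‖_C = sup_{θ∈[−r,0]} ‖u(τ+ω+θ) − u(τ+θ)‖`. -/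
theorem history_psapClass {X : Type*} [NormedAddCommGroup X]
    (r ω : ℝ) (hr : 0 < r) (hω : 0 < ω) (u : ℝ → X)
    (hcont : ContinuousOn u (Set.Ici (-r))) (hbdd : ∃ B, ∀ t ≥ -r, ‖u t‖ ≤ B)
    (h : PSAPclass ω r u) :
    Tendsto (fun T : ℝ => (1 / T) * ∫ s in r..T,
        ⨆ τ ∈ Set.Icc (s - r) s, ⨆ θ ∈ Set.Icc (-r) (0:ℝ), ‖u (τ + ω + θ) - u (τ + θ)‖)
      atTop (nhds 0) :=
  history_psapClass_general r ω hr hω u hcont h
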